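/- arXiv:1808.03964 — 4 statements merged into one kernel-verified Lean document; each statement's English description precedes it below -/
import Mathlib

section
/- Let R₀ be a perfect ring of characteristic p that is complete for the (ϖ₁,…,ϖₙ)-adic topology, where ϖ₁,…,ϖₙ ∈ R₀. Let R = R₀[(ϖ₁⋯ϖₙ)^{-1}] equipped with the topology making R₀ (with the (ϖ₁⋯ϖₙ)-adic topology) an open subring. Then for any x ∈ R with {x^{p^m}}_{m≥0} topologically bounded, and any nonnegative integer m, one has (ϖ₁⋯ϖₙ)^{p^{-m}} x ∈ R₀. In particular the quotient R°/R₀ is killed by (ϖ₁⋯ϖₙ)^{p^{-m}} for every m ≥ 0. -/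
/-- A subset `S` of a topological ring is (topologically) bounded if for every
neighborhood `U` of `0` there is a neighborhood `V` of `0` with `V * S ⊆ U`. -/
def RingBounded {A : Type*} [CommRing A] [TopologicalSpace A] (S : Set A) : Prop :=
  ∀ U ∈ nhds (0 : A), ∃ V ∈ nhds (0 : A), ∀ v ∈ V, ∀ s ∈ S, v * s ∈ U

/-- An element is power-bounded if the set of its powers is bounded. -/
def PowerBounded {A : Type*} [CommRing A] [TopologicalSpace A] (x : A) : Prop :=
  RingBounded {y | ∃ n : ℕ, y = x ^ n}

/-- Let `R₀` be a perfect subring of a perfect topological ring `R` of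
characteristic `p`, open in `R` and carrying the `(ϖ₁, …, ϖₙ)`-adic topology,
with `R = R₀[(ϖ₁⋯ϖₙ)⁻¹]`.  If `x ∈ R` has `{x^(p^m)}` topologically bounded, then
`(ϖ₁⋯ϖₙ)^(p^{-m}) • x ∈ R₀` for every `m ≥ 0` (the fractional power being the
unique `z` with `z^(p^m) = ϖ₁⋯ϖₙ`); in particular `R°/R₀` is killed by
`(ϖ₁⋯ϖₙ)^(p^{-m})` for every `m ≥ 0`. -/
theorem perfection_bounded_fractional_power_mem {R : Type*} [CommRing R]
    [TopologicalSpace R] [IsTopologicalRing R]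
    (p : ℕ) [Fact p.Prime] [CharP R p]
    (hperf : Function.Bijective (frobenius R p))
    (R₀ : Subring R) (hopen : IsOpen (R₀ : Set R))
    (hperf₀ : ∀ x ∈ R₀, ∀ y : R, y ^ p = x → y ∈ R₀)
    (n : ℕ) (ϖ : Fin n → R) (hϖ : ∀ i, ϖ i ∈ R₀)
    (hadic : IsAdic (Ideal.span (Set.range fun i => (⟨ϖ i, hϖ i⟩ : R₀))))
    (hloc : ∀ x : R, ∃ (k : ℕ) (y : R), y ∈ R₀ ∧ (∏ i, ϖ i) ^ k * x = y)
    (m : ℕ) (z : R) (hz : z ^ p ^ m = ∏ i, ϖ i) :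
    (∀ x : R, RingBounded {y | ∃ k : ℕ, y = x ^ p ^ k} → z * x ∈ R₀) ∧
    (∀ x : R, PowerBounded x → z * x ∈ R₀) := by
  classical
  have hp : p.Prime := Fact.out
  set π : R := ∏ i, ϖ i with hπdef
  have hπ₀ : π ∈ R₀ := Subring.prod_mem _ fun i _ => hϖ i
  -- any element with a p-power in R₀ is in R₀
  have hroot : ∀ (j : ℕ) (w : R), w ^ p ^ j ∈ R₀ → w ∈ R₀ := by
    intro j
    induction j with
    | zero => intro w hw; simpa using hw
    | succ j ih =>
      intro w hw
      have : (w ^ p) ^ p ^ j ∈ R₀ := by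
        rw [← pow_mul, ← pow_succ']; exact hw
      exact hperf₀ _ (ih _ this) w rfl
  have key : ∀ x : R, RingBounded {y | ∃ k : ℕ, y = x ^ p ^ k} → z * x ∈ R₀ := by
    intro x hx
    obtain ⟨V, hV, hVx⟩ := hx (R₀ : Set R) (hopen.mem_nhds (zero_mem _))
    have hN : ∃ N : ℕ, ∀ k : ℕ, π ^ N * x ^ p ^ k ∈ R₀ := by
      rcases Nat.eq_zero_or_pos n with hn | hn
      · subst hn
        obtain ⟨k', y, hy, hxy⟩ := hloc x
        have hπ1 : π = 1 := by simp [hπdef]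
        have hx₀ : x ∈ R₀ := by
          rw [hπ1, one_pow, one_mul] at hxy; rw [hxy]; exact hy
        exact ⟨0, fun k => by simpa using pow_mem hx₀ (p ^ k)⟩
      · -- pull back V to R₀ and use the adic topology
        have hV' : (Subtype.val ⁻¹' V : Set R₀) ∈ nhds (0 : R₀) :=
          (continuous_subtype_val.continuousAt (x := (0 : R₀))).preimage_mem_nhds
            (by simpa using hV)
        obtain ⟨N, hIN⟩ := ((isAdic_iff.mp hadic).2 _ hV')
        set I : Ideal R₀ := Ideal.span (Set.range fun i => (⟨ϖ i, hϖ i⟩ : R₀))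
        set π₀ : R₀ := ∏ i, (⟨ϖ i, hϖ i⟩ : R₀) with hπ₀def
        have hπ₀I : π₀ ∈ I := by
          have h0 : (⟨ϖ ⟨0, hn⟩, hϖ _⟩ : R₀) ∈ I :=
            Ideal.subset_span ⟨⟨0, hn⟩, rfl⟩
          rw [hπ₀def, ← Finset.mul_prod_erase Finset.univ _
            (Finset.mem_univ (⟨0, hn⟩ : Fin n))]
          exact Ideal.mul_mem_right _ _ h0
        have hmem : π₀ ^ N ∈ (Subtype.val ⁻¹' V : Set R₀) :=
          hIN (Ideal.pow_mem_pow hπ₀I N)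
        have hcoe : ((π₀ ^ N : R₀) : R) = π ^ N := by
          push_cast [hπ₀def, hπdef]; rfl
        refine ⟨N, fun k => ?_⟩
        have := hVx ((π₀ ^ N : R₀) : R) hmem (x ^ p ^ k) ⟨k, rfl⟩
        rwa [hcoe] at this
    obtain ⟨N, hN⟩ := hN
    have hNle : N ≤ p ^ N := Nat.le_of_lt (Nat.lt_pow_self (n := N) hp.one_lt)
    have hfin : (z * x) ^ p ^ (m + N) ∈ R₀ := by
      have hpow : π ^ p ^ N = π ^ (p ^ N - N) * π ^ N := by
        rw [← pow_add, Nat.sub_add_cancel hNle]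
      have h1 : (z * x) ^ p ^ (m + N) = π ^ (p ^ N - N) * (π ^ N * x ^ p ^ (m + N)) := by
        rw [mul_pow, pow_add, pow_mul, hz, hpow, mul_assoc]
      rw [h1]
      exact mul_mem (pow_mem hπ₀ _) (hN (m + N))
    exact hroot _ _ hfin
  refine ⟨key, fun x hx => key x ?_⟩
  intro U hU
  obtain ⟨V, hV, hVx⟩ := hx U hU
  exact ⟨V, hV, fun v hv s hs => hVx v hv s (by obtain ⟨k, rfl⟩ := hs; exact ⟨p ^ k, rfl⟩)⟩
end

section
/- Let R → S be a pure morphism of commutative rings (i.e., for every R-module N the map N → N ⊗_R S is injective). If M is a finitely presented R-module such that M ⊗_R S is a projective S-module, then M is a projective R-module. -/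
open scoped TensorProduct

universe u

section Aux

variable {R : Type*} [CommRing R] {ι : Type*} [Fintype ι] [DecidableEq ι]
  {X : Type*} [AddCommGroup X] [Module R X]

lemma map_eq_sum_single_aux (g : (ι → R) →ₗ[R] X) (y : ι → R) :
    g y = ∑ k, y k • g (Pi.single k 1) := by
  have hy : y = ∑ k, y k • (Pi.single k 1 : ι → R) := by
    funext j
    simp [Pi.single_apply, Finset.sum_apply]
  conv_lhs => rw [hy]
  rw [map_sum]
  simp

end Aux

set_option maxHeartbeats 1000000 in
set_option maxRecDepth 8000 in
set_option synthInstance.maxHeartbeats 100000 in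
/-- Let `R → S` be a pure (universally injective) morphism of commutative rings.
If `M` is a finitely presented `R`-module such that `M ⊗_R S` is a projective
`S`-module, then `M` is a projective `R`-module. (Stacks 08XD.) -/
theorem projective_of_pure_of_projective_baseChange {R S M : Type u} [CommRing R]
    [CommRing S] [Algebra R S] [AddCommGroup M] [Module R M]
    [Module.FinitePresentation R M]
    (hpure : ∀ (N : Type u) [AddCommGroup N] [Module R N],
      Function.Injective fun n : N => (1 : S) ⊗ₜ[R] n)
    (hproj : Module.Projective S (S ⊗[R] M)) :
    Module.Projective R M := by
  classical
  haveI := hproj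
  obtain ⟨n, π, hπ⟩ := Module.Finite.exists_fin' R M
  have hkerfg : (LinearMap.ker π).FG := Module.FinitePresentation.fg_ker π hπ
  obtain ⟨t, ht⟩ := hkerfg
  let ι : Type u := {x // x ∈ t}
  let v : ι → (Fin n → R) := fun k => (k : Fin n → R)
  -- the "relations" map F : R^ι → R^n
  let F : (ι → R) →ₗ[R] (Fin n → R) :=
    { toFun := fun y => ∑ k, y k • v k
      map_add' := by intro y z; simp [add_smul, Finset.sum_add_distrib]
      map_smul' := by intro r y; simp [mul_smul, Finset.smul_sum]
    }
  have hFe : ∀ k : ι, F (Pi.single k 1) = v k := by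
    intro k
    show (∑ j, (Pi.single k 1 : ι → R) j • v j) = v k
    simp [Pi.single_apply]
    convert (Finset.sum_ite_eq' Finset.univ k v).trans (if_pos (Finset.mem_univ _))
  have hvK : ∀ k : ι, v k ∈ LinearMap.ker π := by
    intro k
    rw [← ht]
    exact Submodule.subset_span k.2
  have hπF : ∀ q, π (F q) = 0 := by
    intro q
    show π (∑ k, q k • v k) = 0
    rw [map_sum]
    refine Finset.sum_eq_zero fun k _ => ?_
    rw [map_smul, (LinearMap.mem_ker.mp (hvK k)), smul_zero]
  have hrange : LinearMap.range F = LinearMap.ker π := by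
    apply le_antisymm
    · rintro _ ⟨q, rfl⟩
      exact LinearMap.mem_ker.mpr (hπF q)
    · rw [← ht, Submodule.span_le]
      rintro x hx
      exact ⟨Pi.single (⟨x, hx⟩ : ι) 1, hFe _⟩
  -- base change
  let πS : S ⊗[R] (Fin n → R) →ₗ[S] S ⊗[R] M := π.baseChange S
  let FS : S ⊗[R] (ι → R) →ₗ[S] S ⊗[R] (Fin n → R) := F.baseChange S
  have hπS : Function.Surjective πS := by
    show Function.Surjective ⇑(π.baseChange S)
    rw [LinearMap.baseChange_eq_ltensor]
    exact LinearMap.lTensor_surjective S hπ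
  have hex : Function.Exact F π := LinearMap.exact_iff.mpr hrange.symm
  have hexS : Function.Exact FS πS := by
    have h := lTensor_exact (N := Fin n → R) S hex hπ
    show Function.Exact ⇑(F.baseChange S) ⇑(π.baseChange S)
    rw [LinearMap.baseChange_eq_ltensor, LinearMap.baseChange_eq_ltensor]
    exact h
  -- splitting over S
  obtain ⟨σ, hσ⟩ := Module.projective_lifting_property πS (LinearMap.id) hπS
  let j : (Fin n → R) →ₗ[R] S ⊗[R] (Fin n → R) := TensorProduct.mk R S (Fin n → R) 1
  let τ : M →ₗ[R] S ⊗[R] (Fin n → R) :=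
    (σ.restrictScalars R) ∘ₗ (TensorProduct.mk R S M 1)
  let d : (Fin n → R) →ₗ[R] S ⊗[R] (Fin n → R) := τ ∘ₗ π - j
  have hd : ∀ p, πS (d p) = 0 := by
    intro p
    have h1 : πS (τ (π p)) = (1 : S) ⊗ₜ[R] (π p) := by
      have := congrArg (fun φ => φ ((1 : S) ⊗ₜ[R] (π p))) hσ
      simpa [τ] using this
    have h2 : πS (j p) = (1 : S) ⊗ₜ[R] (π p) := by
      simp [j, πS]
    show πS (τ (π p) - j p) = 0
    rw [map_sub, h1, h2, sub_self]
  choose b hb using fun i : Fin n => (hexS (d (Pi.single i 1))).mp (hd (Pi.single i 1))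
  -- β with FS ∘ β = d
  let β : (Fin n → R) →ₗ[R] S ⊗[R] (ι → R) :=
    { toFun := fun p => ∑ i, p i • b i
      map_add' := by intro y z; simp [add_smul, Finset.sum_add_distrib]
      map_smul' := by intro r y; simp [mul_smul, Finset.smul_sum]
    }
  have hβ : ∀ p, FS (β p) = d p := by
    intro p
    show FS (∑ i, p i • b i) = d p
    rw [map_sum]
    conv_rhs => rw [map_eq_sum_single_aux d p]
    refine Finset.sum_congr rfl fun i _ => ?_
    rw [LinearMap.map_smul_of_tower, hb i]
  -- purity module
  let Φ : ((Fin n → R) →ₗ[R] (ι → R)) →ₗ[R] ((ι → R) →ₗ[R] (Fin n → R)) :=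
    (LinearMap.llcomp R (ι → R) (ι → R) (Fin n → R) F) ∘ₗ (LinearMap.lcomp R (ι → R) F)
  have hΦ : ∀ γ, Φ γ = F ∘ₗ γ ∘ₗ F := fun γ => rfl
  let N := ((ι → R) →ₗ[R] (Fin n → R)) ⧸ LinearMap.range Φ
  let θ : ((ι → R) →ₗ[R] (Fin n → R)) →ₗ[R] N := (LinearMap.range Φ).mkQ
  let sm : ι → ((Fin n → R) →ₗ[R] ((ι → R) →ₗ[R] (Fin n → R))) := fun k =>
    LinearMap.smulRightₗ (LinearMap.proj k)
  have hsm : ∀ (k : ι) (p : Fin n → R),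
      sm k p = LinearMap.smulRight (LinearMap.proj k) p := fun k p => rfl
  let Ψ : ((ι → R) →ₗ[R] S ⊗[R] (Fin n → R)) →ₗ[R] S ⊗[R] N :=
    ∑ k : ι, (LinearMap.lTensor S (θ ∘ₗ sm k)) ∘ₗ (LinearMap.applyₗ (Pi.single k 1))
  have hΨapply : ∀ h : (ι → R) →ₗ[R] S ⊗[R] (Fin n → R),
      Ψ h = ∑ k : ι, (LinearMap.lTensor S (θ ∘ₗ sm k)) (h (Pi.single k 1)) := by
    intro h
    show (∑ k : ι, (LinearMap.lTensor S (θ ∘ₗ sm k)) ∘ₗ (LinearMap.applyₗ (Pi.single k 1))) h = _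
    rw [LinearMap.sum_apply]
    exact Finset.sum_congr rfl fun k _ => rfl
  -- (i) Ψ (j ∘ g) = 1 ⊗ θ g
  have hΨj : ∀ g : (ι → R) →ₗ[R] (Fin n → R), Ψ (j ∘ₗ g) = (1 : S) ⊗ₜ[R] (θ g) := by
    intro g
    have hg : (∑ k, (sm k) (g (Pi.single k 1))) = g := by
      refine LinearMap.ext fun y => ?_
      rw [LinearMap.coe_sum, Finset.sum_apply]
      have : ∀ k : ι, (sm k) (g (Pi.single k 1)) y = y k • g (Pi.single k 1) := by
        intro k
        rw [hsm, LinearMap.smulRight_apply, LinearMap.proj_apply]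
      rw [Finset.sum_congr rfl fun k _ => this k]
      exact (map_eq_sum_single_aux g y).symm
    rw [hΨapply]
    have : ∀ k : ι, (LinearMap.lTensor S (θ ∘ₗ sm k)) ((j ∘ₗ g) (Pi.single k 1))
        = (1 : S) ⊗ₜ[R] (θ ((sm k) (g (Pi.single k 1)))) := by
      intro k
      show (LinearMap.lTensor S (θ ∘ₗ sm k)) ((1 : S) ⊗ₜ[R] (g (Pi.single k 1))) = _
      rw [LinearMap.lTensor_tmul, LinearMap.comp_apply]
    rw [Finset.sum_congr rfl fun k _ => this k, ← TensorProduct.tmul_sum, ← map_sum, hg]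
  -- (ii) Ψ (FS ∘ β' ∘ F) = 0
  have hΨF : ∀ β' : (Fin n → R) →ₗ[R] S ⊗[R] (ι → R),
      Ψ ((FS.restrictScalars R) ∘ₗ β' ∘ₗ F) = 0 := by
    have key : ∀ (i : Fin n) (x : S ⊗[R] (ι → R)),
        Ψ ((FS.restrictScalars R) ∘ₗ (LinearMap.smulRight (LinearMap.proj i) x) ∘ₗ F) = 0 := by
      intro i x
      induction x with
      | zero =>
        have h0 : (FS.restrictScalars R) ∘ₗ
            (LinearMap.smulRight (LinearMap.proj i) (0 : S ⊗[R] (ι → R))) ∘ₗ F = 0 := by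
          refine LinearMap.ext fun y => ?_
          show FS ((F y) i • (0 : S ⊗[R] (ι → R))) = 0
          rw [smul_zero, map_zero]
        rw [h0, map_zero]
      | tmul s q =>
        have hterm : ∀ k : ι,
            (((FS.restrictScalars R) ∘ₗ (LinearMap.smulRight (LinearMap.proj i) (s ⊗ₜ[R] q)) ∘ₗ F)
              (Pi.single k 1))
            = s ⊗ₜ[R] ((F (Pi.single k 1)) i • F q) := by
          intro k
          show FS ((F (Pi.single k 1)) i • (s ⊗ₜ[R] q)) = _
          rw [LinearMap.map_smul_of_tower]
          have h1 : FS (s ⊗ₜ[R] q) = s ⊗ₜ[R] (F q) := by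
            show (F.baseChange S) (s ⊗ₜ[R] q) = s ⊗ₜ[R] (F q)
            rw [LinearMap.baseChange_tmul]
          rw [h1, TensorProduct.tmul_smul]
        have hsum : (∑ k : ι, (F (Pi.single k 1)) i • (sm k) (F q)) =
            Φ (LinearMap.smulRight (LinearMap.proj i) q) := by
          refine LinearMap.ext fun y => ?_
          have hFy : (F y) i = ∑ k, y k * (F (Pi.single k 1)) i := by
            conv_lhs => rw [map_eq_sum_single_aux F y]
            simp [Finset.sum_apply]
          rw [LinearMap.coe_sum, Finset.sum_apply]
          have e1 : ∀ k : ι, ((F (Pi.single k 1)) i • (sm k) (F q)) y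
              = ((F (Pi.single k 1)) i * y k) • F q := by
            intro k
            rw [LinearMap.smul_apply, hsm, LinearMap.smulRight_apply, LinearMap.proj_apply,
              smul_smul]
          rw [Finset.sum_congr rfl fun k _ => e1 k, ← Finset.sum_smul, hΦ]
          show _ = F ((LinearMap.smulRight (LinearMap.proj i) q) (F y))
          rw [LinearMap.smulRight_apply, LinearMap.proj_apply, map_smul, hFy]
          congr 1
          exact Finset.sum_congr rfl fun k _ => mul_comm _ _
        rw [hΨapply]
        have hterm2 : ∀ k : ι, (LinearMap.lTensor S (θ ∘ₗ sm k))
            (((FS.restrictScalars R) ∘ₗ (LinearMap.smulRight (LinearMap.proj i) (s ⊗ₜ[R] q)) ∘ₗ F)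
              (Pi.single k 1))
            = s ⊗ₜ[R] ((F (Pi.single k 1)) i • θ ((sm k) (F q))) := by
          intro k
          rw [hterm k, LinearMap.lTensor_tmul, LinearMap.comp_apply, map_smul, map_smul]
        rw [Finset.sum_congr rfl fun k _ => hterm2 k, ← TensorProduct.tmul_sum]
        have hz : (∑ k : ι, (F (Pi.single k 1)) i • θ ((sm k) (F q))) = 0 := by
          have : ∀ k : ι, (F (Pi.single k 1)) i • θ ((sm k) (F q))
              = θ ((F (Pi.single k 1)) i • (sm k) (F q)) := by
            intro k
            rw [map_smul]
          rw [Finset.sum_congr rfl fun k _ => this k, ← map_sum, hsum]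
          exact (Submodule.Quotient.mk_eq_zero _).mpr ⟨_, rfl⟩
        rw [hz, TensorProduct.tmul_zero]
      | add x y hx hy =>
        have hadd : (FS.restrictScalars R) ∘ₗ (LinearMap.smulRight (LinearMap.proj i) (x + y)) ∘ₗ F
            = (FS.restrictScalars R) ∘ₗ (LinearMap.smulRight (LinearMap.proj i) x) ∘ₗ F
              + (FS.restrictScalars R) ∘ₗ (LinearMap.smulRight (LinearMap.proj i) y) ∘ₗ F := by
          refine LinearMap.ext fun z => ?_
          show FS ((F z) i • (x + y)) = FS ((F z) i • x) + FS ((F z) i • y)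
          rw [smul_add, map_add]
        rw [hadd, map_add, hx, hy, add_zero]
    intro β'
    have hdec : (FS.restrictScalars R) ∘ₗ β' ∘ₗ F
        = ∑ i : Fin n, (FS.restrictScalars R) ∘ₗ
            (LinearMap.smulRight (LinearMap.proj i) (β' (Pi.single i 1))) ∘ₗ F := by
      refine LinearMap.ext fun y => ?_
      rw [LinearMap.coe_sum, Finset.sum_apply]
      show FS (β' (F y)) = _
      rw [map_eq_sum_single_aux β' (F y), map_sum]
      refine Finset.sum_congr rfl fun i _ => ?_
      rfl
    rw [hdec, map_sum]
    exact Finset.sum_eq_zero fun i _ => key i (β' (Pi.single i 1))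
  -- conclude -F ∈ range Φ
  have hjF : j ∘ₗ (-F) = (FS.restrictScalars R) ∘ₗ β ∘ₗ F := by
    refine LinearMap.ext fun q => ?_
    show (1 : S) ⊗ₜ[R] ((-F) q) = FS (β (F q))
    rw [hβ (F q)]
    show (1 : S) ⊗ₜ[R] (-(F q)) = τ (π (F q)) - j (F q)
    rw [hπF q, map_zero, zero_sub]
    show (1 : S) ⊗ₜ[R] (-(F q)) = -((1 : S) ⊗ₜ[R] (F q))
    rw [TensorProduct.tmul_neg]
  have hzero : (1 : S) ⊗ₜ[R] (θ (-F)) = 0 := by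
    rw [← hΨj (-F), hjF, hΨF β]
  have hθ : θ (-F) = 0 := by
    have h0 : (fun x : N => (1 : S) ⊗ₜ[R] x) (θ (-F)) = (fun x : N => (1 : S) ⊗ₜ[R] x) 0 := by
      simpa using hzero
    exact (hpure N) h0
  have hmem : -F ∈ LinearMap.range Φ :=
    (Submodule.Quotient.mk_eq_zero (LinearMap.range Φ)).mp hθ
  obtain ⟨γ, hγ⟩ := hmem
  -- build the splitting
  let T : (Fin n → R) →ₗ[R] (Fin n → R) := LinearMap.id + F ∘ₗ γ
  have hTF : ∀ q, T (F q) = 0 := by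
    intro q
    have h := congrArg (fun w : (ι → R) →ₗ[R] (Fin n → R) => w q) hγ
    have h' : F (γ (F q)) = -F q := by
      have : (Φ γ) q = (-F) q := h
      rw [hΦ] at this
      exact this
    show F q + F (γ (F q)) = 0
    rw [h', add_neg_cancel]
  have hπT : ∀ p, π (T p) = π p := by
    intro p
    show π (p + F (γ p)) = π p
    rw [map_add, hπF (γ p), add_zero]
  have hkerT : LinearMap.ker π ≤ LinearMap.ker T := by
    intro p hp
    rw [← hrange] at hp
    obtain ⟨q, rfl⟩ := hp
    exact LinearMap.mem_ker.mpr (hTF q)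
  let e := LinearMap.quotKerEquivOfSurjective π hπ
  have he : ∀ p, e (Submodule.Quotient.mk p) = π p := by
    intro p
    simp [e, LinearMap.quotKerEquivOfSurjective, LinearMap.quotKerEquivRange_apply_mk]
  let i0 : M →ₗ[R] (Fin n → R) :=
    (Submodule.liftQ (LinearMap.ker π) T hkerT) ∘ₗ (e.symm : M →ₗ[R] _)
  have hsplit : π ∘ₗ i0 = LinearMap.id := by
    refine LinearMap.ext fun m => ?_
    obtain ⟨p, rfl⟩ := hπ m
    have hsymm : e.symm (π p) = Submodule.Quotient.mk p := by
      rw [← he p, LinearEquiv.symm_apply_apply]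
    show π ((Submodule.liftQ (LinearMap.ker π) T hkerT) (e.symm (π p))) = π p
    rw [hsymm, Submodule.liftQ_apply, hπT]
  exact Module.Projective.of_split i0 π hsplit
end

section
/- Let R → S be a faithfully flat ring map, M₁ a finitely presented R-module, and M₀ an R-module killed by p^m such that R/p^m R → S/p^m S is an isomorphism. Then the natural map Ext¹_R(M₁, M₀) → Ext¹_S(M₁ ⊗_R S, M₀ ⊗_R S) is an isomorphism, provided M₁ is finite projective and M₀ ⊗_R S ≅ M₀. In particular, any extension 0 → M₀ → M → M₁⊗_R S → 0 of S-modules with M₀ killed by p^m descends uniquely to an extension of M₁ by M₀ over R. -/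
open scoped TensorProduct

universe u

/-- If an exact sequence `0 → M₀ → N → M₁ → 0` of `A`-modules splits via a
section `σ` of `π`, then the map `(x, y) ↦ i x + σ y` is bijective. -/
theorem split_bijective {A : Type*} [CommRing A]
    {M₀ M₁ N : Type*} [AddCommGroup M₀] [AddCommGroup M₁] [AddCommGroup N]
    [Module A M₀] [Module A M₁] [Module A N]
    (i : M₀ →ₗ[A] N) (π : N →ₗ[A] M₁) (σ : M₁ →ₗ[A] N)
    (hi : Function.Injective i) (hex : LinearMap.range i = LinearMap.ker π)
    (hσ : ∀ y, π (σ y) = y) :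
    Function.Bijective (fun z : M₀ × M₁ => i z.1 + σ z.2) := by
  have hπi : ∀ x, π (i x) = 0 := fun x => by
    have : i x ∈ LinearMap.ker π := hex ▸ LinearMap.mem_range_self i x
    exact this
  constructor
  · rintro ⟨a, b⟩ ⟨a', b'⟩ h
    simp only at h
    have hb : b = b' := by
      have := congrArg π h
      simpa [map_add, hπi, hσ] using this
    subst hb
    have : i a = i a' := by simpa using h
    exact Prod.ext (hi this) rfl
  · intro n
    have hker : n - σ (π n) ∈ LinearMap.ker π := by simp [hσ]
    rw [← hex] at hker
    obtain ⟨x, hx⟩ := hker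
    exact ⟨(x, π n), by simp [hx]⟩

/-- When `R/p^m → S/p^m` is surjective and `M₀` is an `S`-module killed by
`p^m` with compatible `R`-action, the action map `S ⊗[R] M₀ → M₀` is bijective. -/
theorem action_map_bijective {R S : Type u} [CommRing R] [CommRing S] [Algebra R S]
    (p : ℕ) (m : ℕ)
    (hle : Ideal.span {(p : R) ^ m} ≤
      (Ideal.span {algebraMap R S ((p : R) ^ m)}).comap (algebraMap R S))
    (hbij : Function.Bijective
      (Ideal.quotientMap (Ideal.span {algebraMap R S ((p : R) ^ m)})
        (algebraMap R S) hle))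
    {M₀ : Type u} [AddCommGroup M₀] [Module R M₀] [Module S M₀]
    (hcompat : ∀ (r : R) (x : M₀), algebraMap R S r • x = r • x)
    (hkill : ∀ x : M₀, ((p : R) ^ m) • x = 0) :
    ∃ μ : S ⊗[R] M₀ →ₗ[S] M₀, Function.Bijective μ ∧ (∀ s (x : M₀), μ (s ⊗ₜ x) = s • x) := by
  haveI : IsScalarTower R S M₀ :=
    ⟨fun r s x => by rw [Algebra.smul_def, mul_smul, hcompat]⟩
  refine ⟨LinearMap.liftBaseChange S (LinearMap.id), ?_, fun s x => by
    simp [LinearMap.liftBaseChange_tmul]⟩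
  have key : ∀ z : S ⊗[R] M₀, (1 : S) ⊗ₜ[R] (LinearMap.liftBaseChange S
      (LinearMap.id (R := R) (M := M₀)) z) = z := by
    intro z
    induction z using TensorProduct.induction_on with
    | zero => simp
    | add a b ha hb => simp [map_add, TensorProduct.tmul_add, ha, hb]
    | tmul s x =>
      obtain ⟨rq, hrq⟩ := hbij.2 (Ideal.Quotient.mk _ s)
      obtain ⟨r, rfl⟩ := Ideal.Quotient.mk_surjective rq
      rw [Ideal.quotientMap_mk] at hrq
      have hmem : algebraMap R S r - s ∈ Ideal.span {algebraMap R S ((p : R) ^ m)} :=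
        Ideal.Quotient.eq.mp hrq
      obtain ⟨t, ht⟩ := Ideal.mem_span_singleton.mp hmem
      have hs : s = algebraMap R S r - algebraMap R S ((p : R) ^ m) * t := by
        rw [← ht]; ring
      have h1 : s • x = r • x := by
        rw [hs, sub_smul, mul_smul, hcompat, hcompat, hkill, sub_zero]
      have h2 : s ⊗ₜ[R] x = (1 : S) ⊗ₜ[R] (r • x) := by
        rw [hs, TensorProduct.sub_tmul]
        have hA : (algebraMap R S r) ⊗ₜ[R] x = (1 : S) ⊗ₜ[R] (r • x) := by
          rw [Algebra.algebraMap_eq_smul_one, TensorProduct.smul_tmul]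
        have hB : (algebraMap R S ((p : R) ^ m) * t) ⊗ₜ[R] x = 0 := by
          rw [← Algebra.smul_def, TensorProduct.smul_tmul, hkill, TensorProduct.tmul_zero]
        rw [hA, hB, sub_zero]
      rw [LinearMap.liftBaseChange_tmul, LinearMap.id_apply, h1, h2]
  constructor
  · intro a b hab
    rw [← key a, ← key b, hab]
  · intro x
    exact ⟨(1 : S) ⊗ₜ[R] x, by simp [LinearMap.liftBaseChange_tmul]⟩


/-- Let `R → S` be a faithfully flat map of commutative rings inducing an
isomorphism `R/p^m R ≅ S/p^m S`, let `M₀` be an `R`-module killed by `p^m`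
(hence also an `S`-module), and let `M₁` be a finite projective `R`-module.
Then any extension `0 → M₀ → N → M₁ ⊗_R S → 0` of `S`-modules descends uniquely
to an extension of `M₁` by `M₀` over `R` (this is the content of the isomorphism
`Ext¹_R(M₁, M₀) ≅ Ext¹_S(M₁ ⊗_R S, M₀)`). -/
theorem extension_descends_uniquely {R S : Type u} [CommRing R] [CommRing S]
    [Algebra R S] (p : ℕ) [Fact p.Prime] (m : ℕ) (hm : 0 < m)
    -- `S` is faithfully flat over `R`
    [Module.FaithfullyFlat R S]
    -- `R/p^m R → S/p^m S` is an isomorphism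
    (hle : Ideal.span {(p : R) ^ m} ≤
      (Ideal.span {algebraMap R S ((p : R) ^ m)}).comap (algebraMap R S))
    (hbij : Function.Bijective
      (Ideal.quotientMap (Ideal.span {algebraMap R S ((p : R) ^ m)})
        (algebraMap R S) hle))
    {M₀ : Type u} [AddCommGroup M₀] [Module R M₀] [Module S M₀]
    (hcompat : ∀ (r : R) (x : M₀), algebraMap R S r • x = r • x)
    (hkill : ∀ x : M₀, ((p : R) ^ m) • x = 0)
    {M₁ : Type u} [AddCommGroup M₁] [Module R M₁] [Module.Finite R M₁]
    [Module.Projective R M₁]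
    {N : Type u} [AddCommGroup N] [Module S N]
    (i : M₀ →ₗ[S] N) (π : N →ₗ[S] S ⊗[R] M₁)
    (hi : Function.Injective i) (hπ : Function.Surjective π)
    (hex : LinearMap.range i = LinearMap.ker π) :
    -- existence of a descent
    (∃ (N' : ModuleCat.{u} R) (i' : M₀ →ₗ[R] N') (π' : N' →ₗ[R] M₁),
      Function.Injective i' ∧ Function.Surjective π' ∧
      LinearMap.range i' = LinearMap.ker π' ∧
      ∃ e : (S ⊗[R] N') ≃ₗ[S] N,
        (∀ x : M₀, e ((1 : S) ⊗ₜ[R] i' x) = i x) ∧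
        (∀ y : N', π (e ((1 : S) ⊗ₜ[R] y)) = (1 : S) ⊗ₜ[R] π' y)) ∧
    -- uniqueness of the descent
    (∀ (N₁ N₂ : ModuleCat.{u} R)
      (i₁ : M₀ →ₗ[R] N₁) (π₁ : N₁ →ₗ[R] M₁) (i₂ : M₀ →ₗ[R] N₂) (π₂ : N₂ →ₗ[R] M₁),
      Function.Injective i₁ → Function.Surjective π₁ →
        LinearMap.range i₁ = LinearMap.ker π₁ →
      Function.Injective i₂ → Function.Surjective π₂ →
        LinearMap.range i₂ = LinearMap.ker π₂ →
      (∃ e₁ : (S ⊗[R] N₁) ≃ₗ[S] N, (∀ x : M₀, e₁ ((1 : S) ⊗ₜ[R] i₁ x) = i x) ∧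
        ∀ y : N₁, π (e₁ ((1 : S) ⊗ₜ[R] y)) = (1 : S) ⊗ₜ[R] π₁ y) →
      (∃ e₂ : (S ⊗[R] N₂) ≃ₗ[S] N, (∀ x : M₀, e₂ ((1 : S) ⊗ₜ[R] i₂ x) = i x) ∧
        ∀ y : N₂, π (e₂ ((1 : S) ⊗ₜ[R] y)) = (1 : S) ⊗ₜ[R] π₂ y) →
      ∃ g : N₁ ≃ₗ[R] N₂, (∀ x : M₀, g (i₁ x) = i₂ x) ∧ ∀ y : N₁, π₂ (g y) = π₁ y) := by
  constructor
  · -- existence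
    obtain ⟨μ, hμbij, hμ⟩ := action_map_bijective p m hle hbij hcompat hkill
    -- a section of π, using projectivity of S ⊗ M₁ over S
    obtain ⟨σ, hσ⟩ := Module.projective_lifting_property π LinearMap.id hπ
    have hσ' : ∀ y, π (σ y) = y := fun y => LinearMap.ext_iff.mp hσ y
    -- the split map over S
    set φ : (S ⊗[R] M₀) × (S ⊗[R] M₁) →ₗ[S] N :=
      ((i ∘ₗ μ) ∘ₗ LinearMap.fst S _ _) + (σ ∘ₗ LinearMap.snd S _ _) with hφdef
    have hφ : Function.Bijective φ := by
      have h := split_bijective (i ∘ₗ μ) π σ (hi.comp hμbij.1)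
        (by rw [LinearMap.range_comp_of_range_eq_top i
          (LinearMap.range_eq_top.2 hμbij.2), hex]) hσ'
      exact h
    -- comparison S ⊗ (M₀ × M₁) ≃ (S ⊗ M₀) × (S ⊗ M₁), S-linearly
    set u : S ⊗[R] (M₀ × M₁) →ₗ[S] (S ⊗[R] M₀) × (S ⊗[R] M₁) :=
      (LinearMap.baseChange S (LinearMap.fst R M₀ M₁)).prod
        (LinearMap.baseChange S (LinearMap.snd R M₀ M₁)) with hudef
    have hucoe : ∀ z, u z = TensorProduct.prodRight R S S M₀ M₁ z := by
      intro z
      induction z using TensorProduct.induction_on with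
      | zero => simp
      | add a b ha hb => simp [map_add, ha, hb]
      | tmul s x => obtain ⟨a, b⟩ := x; simp [hudef]
    have hu : Function.Bijective u := by
      have : ⇑u = ⇑(TensorProduct.prodRight R S S M₀ M₁) := funext hucoe
      rw [this]
      exact (TensorProduct.prodRight R S S M₀ M₁).bijective
    have key1 : ∀ x : M₀,
        ((LinearEquiv.ofBijective u hu).trans (LinearEquiv.ofBijective φ hφ))
          ((1 : S) ⊗ₜ[R] (LinearMap.inl R M₀ M₁ x)) = i x := by
      intro x
      have h1 : u ((1 : S) ⊗ₜ[R] (LinearMap.inl R M₀ M₁ x)) = ((1 : S) ⊗ₜ[R] x, 0) := by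
        simp [hudef]
      simp only [LinearEquiv.trans_apply, LinearEquiv.ofBijective_apply]
      rw [h1]
      simp [hφdef, hμ]
    have hπi : ∀ x, π (i x) = 0 := fun x => by
      have : i x ∈ LinearMap.ker π := hex ▸ LinearMap.mem_range_self i x
      exact this
    have key2 : ∀ y : M₀ × M₁,
        π (((LinearEquiv.ofBijective u hu).trans (LinearEquiv.ofBijective φ hφ))
          ((1 : S) ⊗ₜ[R] y)) = (1 : S) ⊗ₜ[R] (LinearMap.snd R M₀ M₁ y) := by
      rintro ⟨a, b⟩
      have h1 : u ((1 : S) ⊗ₜ[R] ((a, b) : M₀ × M₁)) = ((1 : S) ⊗ₜ[R] a, (1 : S) ⊗ₜ[R] b) := by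
        simp [hudef]
      simp only [LinearEquiv.trans_apply, LinearEquiv.ofBijective_apply]
      rw [h1]
      simp [hφdef, hμ, hπi, hσ']
    exact ⟨ModuleCat.of R (M₀ × M₁), LinearMap.inl R M₀ M₁, LinearMap.snd R M₀ M₁,
      LinearMap.inl_injective, LinearMap.snd_surjective, LinearMap.range_inl R M₀ M₁,
      (LinearEquiv.ofBijective u hu).trans (LinearEquiv.ofBijective φ hφ), key1, key2⟩
  · -- uniqueness
    rintro N₁ N₂ i₁ π₁ i₂ π₂ hi₁ hπ₁ hex₁ hi₂ hπ₂ hex₂ _ _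
    obtain ⟨σ₁, hσ₁⟩ := Module.projective_lifting_property π₁ LinearMap.id hπ₁
    obtain ⟨σ₂, hσ₂⟩ := Module.projective_lifting_property π₂ LinearMap.id hπ₂
    have hσ₁' : ∀ y, π₁ (σ₁ y) = y := fun y => LinearMap.ext_iff.mp hσ₁ y
    have hσ₂' : ∀ y, π₂ (σ₂ y) = y := fun y => LinearMap.ext_iff.mp hσ₂ y
    set f₁ : (M₀ × M₁) →ₗ[R] N₁ :=
      (i₁ ∘ₗ LinearMap.fst R M₀ M₁) + (σ₁ ∘ₗ LinearMap.snd R M₀ M₁) with hf₁def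
    set f₂ : (M₀ × M₁) →ₗ[R] N₂ :=
      (i₂ ∘ₗ LinearMap.fst R M₀ M₁) + (σ₂ ∘ₗ LinearMap.snd R M₀ M₁) with hf₂def
    have hf₁ : Function.Bijective f₁ := split_bijective i₁ π₁ σ₁ hi₁ hex₁ hσ₁'
    have hf₂ : Function.Bijective f₂ := split_bijective i₂ π₂ σ₂ hi₂ hex₂ hσ₂'
    set F₁ := LinearEquiv.ofBijective f₁ hf₁
    set F₂ := LinearEquiv.ofBijective f₂ hf₂
    have hπi₁ : ∀ x, π₁ (i₁ x) = 0 := fun x => by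
      have : i₁ x ∈ LinearMap.ker π₁ := hex₁ ▸ LinearMap.mem_range_self i₁ x
      exact this
    have hπi₂ : ∀ x, π₂ (i₂ x) = 0 := fun x => by
      have : i₂ x ∈ LinearMap.ker π₂ := hex₂ ▸ LinearMap.mem_range_self i₂ x
      exact this
    refine ⟨F₁.symm.trans F₂, ?_, ?_⟩
    · intro x
      have h : F₁ ((x, 0) : M₀ × M₁) = i₁ x := by
        simp [F₁, hf₁def]
      simp only [LinearEquiv.trans_apply, ← h, LinearEquiv.symm_apply_apply]
      simp [F₂, hf₂def]
    · intro y
      rw [LinearEquiv.trans_apply]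
      have h2 : π₂ (F₂ (F₁.symm y)) = (F₁.symm y).2 := by
        simp [F₂, hf₂def, hπi₂, hσ₂']
      have h1 : ∀ w : M₀ × M₁, π₁ (F₁ w) = w.2 := by
        intro w
        simp [F₁, hf₁def, hπi₁, hσ₁']
      rw [h2, ← h1 (F₁.symm y), LinearEquiv.apply_symm_apply]
end

section
/- Let O₁ ⊆ O and O₁ ⊆ O₂ be subrings of a common ring Õ with O ∩ O₂ = O₁ (intersection inside Õ), and let M be a finite projective O₁-module. Then inside M ⊗_{O₁} Õ one has (M ⊗_{O₁} O) ∩ (M ⊗_{O₁} O₂) = M. -/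
open scoped TensorProduct

universe u

section Aux

variable {O₁ Otil : Type u} [CommRing O₁] [CommRing Otil] [Algebra O₁ Otil]

/-- The `i`-th coordinate functional on `Otil ⊗ (Fin n → O₁)`. -/
private noncomputable def phiAux (n : ℕ) (i : Fin n) :
    Otil ⊗[O₁] (Fin n → O₁) →ₗ[O₁] Otil :=
  TensorProduct.lift
    { toFun := fun x =>
        { toFun := fun f => f i • x
          map_add' := fun f g => by simp [add_smul]
          map_smul' := fun c f => by simp [mul_smul] }
      map_add' := fun x y => LinearMap.ext fun f => smul_add (f i) x y
      map_smul' := fun c x => LinearMap.ext fun f => smul_comm (f i) c x }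

private lemma phiAux_tmul (n : ℕ) (i : Fin n) (a : Otil) (f : Fin n → O₁) :
    phiAux n i (a ⊗ₜ[O₁] f) = f i • a := rfl

private lemma sum_phiAux (n : ℕ) (t : Otil ⊗[O₁] (Fin n → O₁)) :
    ∑ i, (phiAux n i t) ⊗ₜ[O₁] (Pi.single i 1 : Fin n → O₁) = t := by
  induction t using TensorProduct.induction_on with
  | zero => simp
  | tmul x f =>
      have : ∀ i : Fin n,
          (phiAux n i (x ⊗ₜ[O₁] f)) ⊗ₜ[O₁] (Pi.single i 1 : Fin n → O₁) =
            x ⊗ₜ[O₁] (Pi.single i (f i) : Fin n → O₁) := by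
        intro i
        rw [phiAux_tmul, TensorProduct.smul_tmul]
        congr 1
        ext j
        by_cases h : j = i <;> simp [h, Pi.single_apply]
      rw [Finset.sum_congr rfl fun i _ => this i, ← TensorProduct.tmul_sum,
        Finset.univ_sum_single]
  | add x y hx hy =>
      simp only [map_add, TensorProduct.add_tmul, Finset.sum_add_distrib, hx, hy]

end Aux

/-- Let `O₁ ⊆ O` and `O₁ ⊆ O₂` be subrings of a common ring `Otil` with
`O ∩ O₂ = O₁`, and let `M` be a finite projective `O₁`-module.  Then inside
`M ⊗_{O₁} Otil` one has `(M ⊗_{O₁} O) ∩ (M ⊗_{O₁} O₂) = M`, where the two tensor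
products are regarded as the `O₁`-submodules spanned by the elementary tensors
`a ⊗ m` with `a ∈ O` (resp. `a ∈ O₂`), and `M` as the image of `m ↦ 1 ⊗ m`. -/
theorem tensor_intersection_of_subrings {O₁ Otil : Type u} [CommRing O₁]
    [CommRing Otil] [Algebra O₁ Otil]
    (hinj : Function.Injective (algebraMap O₁ Otil))
    (O O₂ : Subalgebra O₁ Otil)
    (hcap : (O : Set Otil) ∩ (O₂ : Set Otil) = Set.range (algebraMap O₁ Otil))
    {M : Type u} [AddCommGroup M] [Module O₁ M] [Module.Finite O₁ M]
    [Module.Projective O₁ M] :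
    Submodule.span O₁ {t : Otil ⊗[O₁] M | ∃ a ∈ O, ∃ m : M, t = a ⊗ₜ[O₁] m} ⊓
      Submodule.span O₁ {t : Otil ⊗[O₁] M | ∃ a ∈ O₂, ∃ m : M, t = a ⊗ₜ[O₁] m} =
    LinearMap.range (TensorProduct.mk O₁ Otil M 1) := by
  classical
  obtain ⟨n, g, hg⟩ := Module.Finite.exists_fin' O₁ M
  obtain ⟨s, hs⟩ := Module.projective_lifting_property g (LinearMap.id) hg
  set ψ : Otil ⊗[O₁] M →ₗ[O₁] Otil ⊗[O₁] (Fin n → O₁) :=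
    TensorProduct.map LinearMap.id s with hψ
  -- ψ maps each span into the corresponding span over the free module
  have hmapS : ∀ S : Subalgebra O₁ Otil, ∀ t : Otil ⊗[O₁] M,
      t ∈ Submodule.span O₁ {t : Otil ⊗[O₁] M | ∃ a ∈ S, ∃ m : M, t = a ⊗ₜ[O₁] m} →
      ψ t ∈ Submodule.span O₁
        {t : Otil ⊗[O₁] (Fin n → O₁) | ∃ a ∈ S, ∃ f : Fin n → O₁, t = a ⊗ₜ[O₁] f} := by
    intro S t ht
    have h : ψ t ∈ Submodule.map ψ
        (Submodule.span O₁ {t : Otil ⊗[O₁] M | ∃ a ∈ S, ∃ m : M, t = a ⊗ₜ[O₁] m}) :=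
      Submodule.mem_map_of_mem ht
    rw [Submodule.map_span] at h
    refine Submodule.span_mono ?_ h
    rintro _ ⟨_, ⟨a, ha, m, rfl⟩, rfl⟩
    exact ⟨a, ha, s m, by simp [hψ]⟩
  -- coordinates of elements of a span lie in the subalgebra
  have hcoord : ∀ S : Subalgebra O₁ Otil, ∀ u : Otil ⊗[O₁] (Fin n → O₁),
      u ∈ Submodule.span O₁
        {t : Otil ⊗[O₁] (Fin n → O₁) | ∃ a ∈ S, ∃ f : Fin n → O₁, t = a ⊗ₜ[O₁] f} →
      ∀ i, phiAux n i u ∈ S := by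
    intro S u hu i
    have hle : Submodule.span O₁
        {t : Otil ⊗[O₁] (Fin n → O₁) | ∃ a ∈ S, ∃ f : Fin n → O₁, t = a ⊗ₜ[O₁] f} ≤
        (Subalgebra.toSubmodule S).comap (phiAux n i) := by
      rw [Submodule.span_le]
      rintro _ ⟨a, ha, f, rfl⟩
      have : phiAux n i (a ⊗ₜ[O₁] f) ∈ Subalgebra.toSubmodule S := by
        rw [phiAux_tmul]
        exact Submodule.smul_mem _ (f i) ha
      exact this
    exact hle hu
  apply le_antisymm
  · rintro t ⟨ht1, ht2⟩
    have h1 : ∀ i, phiAux n i (ψ t) ∈ Set.range (algebraMap O₁ Otil) := by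
      intro i
      rw [← hcap]
      exact ⟨hcoord O _ (hmapS O t ht1) i, hcoord O₂ _ (hmapS O₂ t ht2) i⟩
    choose c hc using h1
    have hψt : ψ t = (1 : Otil) ⊗ₜ[O₁] (∑ i, c i • (Pi.single i 1 : Fin n → O₁)) := by
      rw [TensorProduct.tmul_sum, ← sum_phiAux n (ψ t)]
      refine Finset.sum_congr rfl fun i _ => ?_
      rw [← hc i, Algebra.algebraMap_eq_smul_one, TensorProduct.smul_tmul]
    have hcomp : (TensorProduct.map (LinearMap.id : Otil →ₗ[O₁] Otil) g).comp ψ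
        = LinearMap.id := by
      rw [hψ, ← TensorProduct.map_comp, hs]
      simp [TensorProduct.map_id]
    refine ⟨g (∑ i, c i • (Pi.single i 1 : Fin n → O₁)), ?_⟩
    have : TensorProduct.map (LinearMap.id : Otil →ₗ[O₁] Otil) g (ψ t) = t := by
      rw [← LinearMap.comp_apply, hcomp, LinearMap.id_apply]
    rw [← this, hψt]
    simp [TensorProduct.map_tmul, TensorProduct.tmul_sum, TensorProduct.tmul_smul,
      map_sum]
  · rintro _ ⟨m, rfl⟩
    exact ⟨Submodule.subset_span ⟨1, one_mem _, m, rfl⟩,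
      Submodule.subset_span ⟨1, one_mem _, m, rfl⟩⟩
end
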